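/- Under the assumptions of the auxiliary-path lemma, the log conditional density satisfies log p(y_t | x_t) = log p(y | x₁) − (m/2) log(α_t²) for every t with α_t ≠ 0, where p(y|x₁) is the N(A x₁, σ_y² I) density evaluated at y and p(y_t | x_t) is the N(A x_t, α_t² σ_y² I) density evaluated at y_t. -/

import Mathlib

open MeasureTheory

/-! The residual `y_t - A x_t` equals `α_t • (y - A x₁)`, so the identity is the scaling law of a
centred isotropic Gaussian density under `v ↦ c • v`, `τ ↦ c² τ`. -/

/-- Gaussian density on ℝᵐ with mean `0` and covariance `τ·I`, evaluated at `v`. -/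
noncomputable def gaussPDFVar (m : ℕ) (τ : ℝ) (v : EuclideanSpace ℝ (Fin m)) : ℝ :=
  (2 * Real.pi * τ) ^ (-(m : ℝ) / 2) * Real.exp (-‖v‖ ^ 2 / (2 * τ))

lemma log_gaussPDFVar (m : ℕ) {τ : ℝ} (hτ : 0 < τ) (v : EuclideanSpace ℝ (Fin m)) :
    Real.log (gaussPDFVar m τ v) =
      -(m : ℝ) / 2 * Real.log (2 * Real.pi * τ) + -‖v‖ ^ 2 / (2 * τ) := by
  have h2πτ : 0 < 2 * Real.pi * τ := by positivity
  rw [gaussPDFVar, Real.log_mul (Real.rpow_pos_of_pos h2πτ _).ne' (Real.exp_ne_zero _),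
    Real.log_rpow h2πτ, Real.log_exp]

/-- The quadratic term is invariant; only the normalising constant moves, by the Jacobian `|c|^m`. -/
lemma log_gaussPDFVar_smul (m : ℕ) {τ c : ℝ} (hτ : 0 < τ) (hc : c ≠ 0)
    (v : EuclideanSpace ℝ (Fin m)) :
    Real.log (gaussPDFVar m (c ^ 2 * τ) (c • v)) =
      Real.log (gaussPDFVar m τ v) - (m : ℝ) / 2 * Real.log (c ^ 2) := by
  have hc2 : 0 < c ^ 2 := by positivity
  have hlog : Real.log (2 * Real.pi * (c ^ 2 * τ)) =
      Real.log (2 * Real.pi * τ) + Real.log (c ^ 2) := by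
    rw [← Real.log_mul (by positivity) hc2.ne']
    ring_nf
  have hnorm : ‖c • v‖ ^ 2 = c ^ 2 * ‖v‖ ^ 2 := by
    rw [norm_smul, mul_pow, Real.norm_eq_abs, sq_abs]
  have hquad : -(c ^ 2 * ‖v‖ ^ 2) / (2 * (c ^ 2 * τ)) = -‖v‖ ^ 2 / (2 * τ) := by
    field_simp
  rw [log_gaussPDFVar m (mul_pos hc2 hτ), log_gaussPDFVar m hτ, hlog, hnorm, hquad]
  ring

lemma smul_add_smul_sub_map_smul_add_smul {R M N : Type*} [CommRing R] [AddCommGroup M]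
    [AddCommGroup N] [Module R M] [Module R N] (A : M →ₗ[R] N) (a b : R) (x₀ x₁ : M) (y : N) :
    a • y + b • A x₀ - A (a • x₁ + b • x₀) = a • (y - A x₁) := by
  rw [map_add, map_smul, map_smul]
  module

theorem stmt3_general (n m : ℕ)
    (A : EuclideanSpace ℝ (Fin n) →ₗ[ℝ] EuclideanSpace ℝ (Fin m))
    (σy : ℝ) (hσ : 0 < σy)
    (α β : ℝ → ℝ) (x0 x1 : EuclideanSpace ℝ (Fin n))
    (y : EuclideanSpace ℝ (Fin m))
    (x : ℝ → EuclideanSpace ℝ (Fin n)) (hx : ∀ s, x s = α s • x1 + β s • x0)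
    (yt : ℝ → EuclideanSpace ℝ (Fin m)) (hyt : ∀ s, yt s = α s • y + β s • A x0)
    (t : ℝ) (hαt : α t ≠ 0) :
    Real.log (gaussPDFVar m ((α t) ^ 2 * σy ^ 2) (yt t - A (x t))) =
      Real.log (gaussPDFVar m (σy ^ 2) (y - A x1)) -
        ((m : ℝ) / 2) * Real.log ((α t) ^ 2) := by
  rw [hyt, hx, smul_add_smul_sub_map_smul_add_smul]
  exact log_gaussPDFVar_smul m (pow_pos hσ 2) hαt _

/-- Under the auxiliary-path construction,
`log p(y_t | x_t) = log p(y | x₁) − (m/2) log(α_t²)` whenever `α_t ≠ 0`. -/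
theorem stmt3 (n m : ℕ)
    (A : EuclideanSpace ℝ (Fin n) →ₗ[ℝ] EuclideanSpace ℝ (Fin m))
    (σy : ℝ) (hσ : 0 < σy)
    (α β : ℝ → ℝ) (x0 x1 : EuclideanSpace ℝ (Fin n))
    (ε y : EuclideanSpace ℝ (Fin m)) (hy : y = A x1 + ε)
    (x : ℝ → EuclideanSpace ℝ (Fin n)) (hx : ∀ s, x s = α s • x1 + β s • x0)
    (yt : ℝ → EuclideanSpace ℝ (Fin m)) (hyt : ∀ s, yt s = α s • y + β s • A x0)
    (t : ℝ) (ht : t ∈ Set.Icc (0:ℝ) 1) (hαt : α t ≠ 0) :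
    Real.log (gaussPDFVar m ((α t) ^ 2 * σy ^ 2) (yt t - A (x t))) =
      Real.log (gaussPDFVar m (σy ^ 2) (y - A x1)) -
        ((m : ℝ) / 2) * Real.log ((α t) ^ 2) :=
  stmt3_general n m A σy hσ α β x0 x1 y x hx yt hyt t hαt
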